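/- arXiv:math/0209393 — 2 statements merged into one kernel-verified Lean document; each statement's English description precedes it below -/
import Mathlib

section
/- Let t be a real number with 2^{−it} = 1, i.e., t = 2kπ/log 2 for some nonzero integer k. Then for every natural number N ≥ 1, ζ*_{2N}(1 + it) = −N^{−it} · d_N(1 + it). -/
/-!
Write `s = 1 + it`. The hypothesis on `t` says exactly that `2^{-it} = 1`, i.e. `2^{-s} = 1/2`, so
`(2m)^{-s} = m^{-s}/2`. Hence the even terms of the alternating sum cancel the first half of the full
sum: `ζ*_{2N}(s) = ∑_{N<n≤2N} n^{-s} = N^{-it} · (1/N) ∑_{j≤N} (1 + j/N)^{-s}`, using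
`(N + j)^{-s} = N^{-1} N^{-it} (1 + j/N)^{-s}`. The same identity `2^{1-s} = 1` makes
`∫_0^1 (1+x)^{-s} dx = (2^{1-s} - 1)/(1 - s)` vanish, since `1 - s = -it ≠ 0`.
-/

open Finset Complex

theorem sum_Icc_two_mul_alternating_eq_sum_Ioc {M : Type*} [AddCommGroup M] (f : ℕ → M)
    (hf : ∀ m, f m = 2 • f (2 * m)) (N : ℕ) :
    ∑ n ∈ Icc 1 (2 * N), (-1 : ℤ) ^ (n - 1) • f n = ∑ n ∈ Ioc N (2 * N), f n := by
  induction N with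
  | zero => simp
  | succ N ih =>
    rw [show 2 * (N + 1) = 2 * N + 1 + 1 by ring]
    have hleft : ∑ n ∈ Icc 1 (2 * N + 1 + 1), (-1 : ℤ) ^ (n - 1) • f n =
        ∑ n ∈ Icc 1 (2 * N), (-1 : ℤ) ^ (n - 1) • f n + f (2 * N + 1) - f (2 * N + 2) := by
      rw [sum_Icc_succ_top (by omega), sum_Icc_succ_top (by omega)]
      simp [pow_succ, pow_mul, sub_eq_add_neg]
    have hright : ∑ n ∈ Ioc N (2 * N), f n + f (2 * N + 1) + f (2 * N + 2) =
        f (N + 1) + ∑ n ∈ Ioc (N + 1) (2 * N + 1 + 1), f n := by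
      rw [← sum_Ioc_succ_top (by omega), ← sum_Ioc_succ_top (by omega),
        ← sum_Ioc_consecutive _ (by omega : N ≤ N + 1) (by omega), Nat.Ioc_succ_singleton,
        sum_singleton]
    have hdouble : f (N + 1) = 2 • f (2 * N + 2) := hf (N + 1)
    rw [hdouble, two_nsmul] at hright
    rw [hleft, ih, eq_comm, ← add_right_inj (f (2 * N + 2) + f (2 * N + 2)), ← hright]
    abel

theorem sum_Ioc_eq_sum_Icc_one_add {M : Type*} [AddCommMonoid M] (f : ℕ → M) (a b : ℕ) :
    ∑ n ∈ Ioc a (a + b), f n = ∑ j ∈ Icc 1 b, f (a + j) := by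
  rw [← Icc_add_one_left_eq_Ioc, ← map_add_left_Icc 1 b a, sum_map]
  rfl

theorem cpow_neg_one_add {x : ℂ} (hx : x ≠ 0) (z : ℂ) : x ^ (-(1 + z)) = x⁻¹ * x ^ (-z) := by
  rw [neg_add, cpow_add _ _ hx, cpow_neg_one]

theorem ofReal_add_cpow {x y : ℝ} (hx : 0 < x) (hxy : 0 ≤ x + y) (w : ℂ) :
    ((x + y : ℝ) : ℂ) ^ w = (x : ℂ) ^ w * (1 + (y : ℂ) / x) ^ w := by
  have h := mul_cpow_ofReal_nonneg hx.le (div_nonneg hxy hx.le) w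
  rw [← ofReal_mul, mul_div_cancel₀ _ hx.ne'] at h
  rw [h, ofReal_div, ofReal_add, add_div, div_self (ofReal_ne_zero.mpr hx.ne')]

theorem ofReal_cpow_neg_mul_I_eq_one {b t : ℝ} (hb : 0 < b) {k : ℤ}
    (h : t * Real.log b = 2 * k * Real.pi) : (b : ℂ) ^ (-(t : ℂ) * I) = 1 := by
  have h' := congrArg ((↑) : ℝ → ℂ) h
  push_cast at h'
  rw [cpow_def_of_ne_zero (ofReal_ne_zero.mpr hb.ne'), ← ofReal_log hb.le,
    show (Real.log b : ℂ) * (-(t : ℂ) * I) = (-k : ℤ) * (2 * Real.pi * I) by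
      push_cast; linear_combination (-I) * h']
  exact exp_int_mul_two_pi_mul_I _

theorem sum_Icc_two_mul_alternating_cpow {w : ℂ} (hw : (2 : ℂ) ^ w = 2⁻¹) (N : ℕ) :
    ∑ n ∈ Icc 1 (2 * N), (-1 : ℂ) ^ (n - 1) * (n : ℂ) ^ w =
      ∑ j ∈ Icc 1 N, ((N + j : ℕ) : ℂ) ^ w := by
  have hdouble (m : ℕ) : (m : ℂ) ^ w = 2 • ((2 * m : ℕ) : ℂ) ^ w := by
    rw [Nat.cast_mul, Nat.cast_ofNat, ← ofReal_ofNat, ← ofReal_natCast,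
      mul_cpow_ofReal_nonneg zero_le_two m.cast_nonneg, ofReal_ofNat, hw]
    simp
  rw [← sum_Ioc_eq_sum_Icc_one_add (fun n : ℕ => (n : ℂ) ^ w), ← two_mul,
    ← sum_Icc_two_mul_alternating_eq_sum_Ioc _ hdouble]
  simp [zsmul_eq_mul]

theorem integral_one_add_cpow {w : ℂ} (hw : w ≠ -1) :
    ∫ x in (0 : ℝ)..1, ((1 + x : ℝ) : ℂ) ^ w = (2 ^ (w + 1) - 1) / (w + 1) := by
  have h0 : (0 : ℝ) ∉ Set.uIcc 1 2 := by
    rw [Set.uIcc_of_le one_le_two]; norm_num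
  rw [intervalIntegral.integral_comp_add_left (fun x : ℝ => (x : ℂ) ^ w) 1,
    integral_cpow (Or.inr ⟨hw, by norm_num [h0]⟩)]
  norm_num

theorem alt_partial_at_special_point_general (t : ℝ) (k : ℤ) (hk : k ≠ 0)
    (ht : t = 2 * k * Real.pi / Real.log 2) (N : ℕ) :
    (∑ n ∈ Finset.Icc 1 (2 * N), (-1 : ℂ) ^ (n - 1) * (n : ℂ) ^ (-(1 + t * Complex.I))) =
      -(N : ℂ) ^ (-(t : ℂ) * Complex.I) *
        ((∫ x in (0 : ℝ)..1, ((1 + x : ℝ) : ℂ) ^ (-(1 + t * Complex.I))) -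
          (1 / (N : ℂ)) *
            ∑ j ∈ Finset.Icc 1 N, (1 + (j : ℂ) / (N : ℂ)) ^ (-(1 + t * Complex.I))) := by
  have ht0 : t ≠ 0 := by rw [ht]; positivity
  have h2 : (2 : ℂ) ^ (-(t * I)) = 1 := by
    simpa using ofReal_cpow_neg_mul_I_eq_one two_pos (k := k) (by rw [ht]; field_simp)
  have hintegral : ∫ x in (0 : ℝ)..1, ((1 + x : ℝ) : ℂ) ^ (-(1 + t * I)) = 0 := by
    have hw : -(1 + t * I) + 1 = -(t * I) := by ring
    rw [integral_one_add_cpow (by simp [ht0]), hw, h2, sub_self, zero_div]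
  rw [sum_Icc_two_mul_alternating_cpow (by rw [cpow_neg_one_add two_ne_zero, h2, mul_one]),
    hintegral, zero_sub, neg_mul_neg, mul_sum, mul_sum]
  refine sum_congr rfl fun j hj => ?_
  have hN : (0 : ℝ) < N := Nat.cast_pos.mpr (by have := mem_Icc.mp hj; omega)
  rw [Nat.cast_add, ← ofReal_natCast, ← ofReal_natCast, ← ofReal_add,
    ofReal_add_cpow hN (by positivity), cpow_neg_one_add (ofReal_ne_zero.mpr hN.ne'), neg_mul]
  simp only [ofReal_natCast]
  ring

/-- If `t = 2kπ/log 2` with `k ≠ 0` (so that `2^{−it} = 1`), then for every `N ≥ 1`,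
`ζ*_{2N}(1 + it) = −N^{−it} · d_N(1 + it)`. -/
theorem alt_partial_at_special_point (t : ℝ) (k : ℤ) (hk : k ≠ 0)
    (ht : t = 2 * k * Real.pi / Real.log 2) (N : ℕ) (hN : 1 ≤ N) :
    (∑ n ∈ Finset.Icc 1 (2 * N), (-1 : ℂ) ^ (n - 1) * (n : ℂ) ^ (-(1 + t * Complex.I))) =
      -(N : ℂ) ^ (-(t : ℂ) * Complex.I) *
        ((∫ x in (0 : ℝ)..1, ((1 + x : ℝ) : ℂ) ^ (-(1 + t * Complex.I))) -
          (1 / (N : ℂ)) *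
            ∑ j ∈ Finset.Icc 1 N, (1 + (j : ℂ) / (N : ℂ)) ^ (-(1 + t * Complex.I))) :=
  alt_partial_at_special_point_general t k hk ht N
end

section
/- Let k be a nonzero integer and set t = 2kπ/log 2. Then the alternating Dirichlet series ∑_{n=1}^∞ (−1)^{n−1} n^{−(1+it)} converges to 0; that is, the sequence of partial sums ζ*_M(1+it) = ∑_{n=1}^M (−1)^{n−1} n^{−(1+it)} tends to 0 as M → ∞. In other words, the alternating zeta function ζ*(s) vanishes at s = 1 + 2kπi/log 2. -/
open Finset Filter Complex

section Aux
open Set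

lemma psi_deriv {s : ℂ} (hs0 : s ≠ 0) {x : ℝ} (hx : 0 < x) :
    HasDerivAt (fun y : ℝ => ((y:ℂ)) ^ (-s)) (-s * (x:ℂ) ^ (-s - 1)) x := by
  have h1 : (-s - 1 : ℂ) ≠ -1 := by
    intro h; apply hs0; linear_combination -h
  have := (hasDerivAt_ofReal_cpow_const' hx.ne' h1).const_mul (-s)
  have e : (-s - 1 + 1 : ℂ) = -s := by ring
  rw [e] at this
  convert this using 2 with y
  case e'_8 => exact (mul_div_cancel₀ _ (neg_ne_zero.2 hs0)).symm
  case e'_4 => rfl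

lemma hasDerivAt_ofReal' (x : ℝ) : HasDerivAt (fun y : ℝ => ((y:ℂ))) 1 x := by
  simpa using (hasDerivAt_id x).ofReal_comp

lemma phi_deriv {s : ℂ} (hs1 : s ≠ 1) (c : ℂ) {x : ℝ} (hx : 0 < x) :
    HasDerivAt (fun y : ℝ => ((y:ℂ)) ^ (1 - s) / (1 - s) - (y:ℂ) * c)
      ((x:ℂ) ^ (-s) - c) x := by
  have h1 : (-s : ℂ) ≠ -1 := by
    intro h; apply hs1; linear_combination -h
  have h2 := hasDerivAt_ofReal_cpow_const' hx.ne' h1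
  have e : (-s + 1 : ℂ) = 1 - s := by ring
  rw [e] at h2
  have h3 := h2.sub ((hasDerivAt_ofReal' x).mul_const c)
  rw [one_mul] at h3
  exact h3

lemma step_est {s : ℂ} (hre : s.re = 1) (hs1 : s ≠ 1) {n : ℝ} (hn : 1 ≤ n) :
    ‖(((n+1 : ℝ):ℂ) ^ (1-s) - ((n : ℝ):ℂ) ^ (1-s)) / (1-s) - ((n:ℝ):ℂ) ^ (-s)‖ ≤ ‖s‖ / n ^ 2 := by
  have hs0 : s ≠ 0 := by intro h; rw [h] at hre; simp at hre
  have hnpos : (0:ℝ) < n := lt_of_lt_of_le one_pos hn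
  set C : ℝ := ‖s‖ / n ^ 2 with hC
  have inner : ∀ x ∈ Icc n (n+1), ‖((x:ℝ):ℂ) ^ (-s) - ((n:ℝ):ℂ) ^ (-s)‖ ≤ C := by
    intro x hx
    have hb : ∀ y ∈ Icc n (n+1), ‖-s * ((y:ℝ):ℂ) ^ (-s - 1)‖ ≤ C := by
      intro y hy
      have hy0 : 0 < y := lt_of_lt_of_le hnpos hy.1
      rw [norm_mul, norm_neg,
        Complex.norm_cpow_eq_rpow_re_of_pos hy0]
      have hre2 : (-s - 1).re = -2 := by simp [hre]; norm_num
      rw [hre2]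
      have h1 : y ^ (-2 : ℝ) ≤ n ^ (-2 : ℝ) := by
        apply Real.rpow_le_rpow_of_nonpos hnpos hy.1
        norm_num
      have h2 : n ^ (-2 : ℝ) = 1 / n ^ 2 := by
        rw [Real.rpow_neg hnpos.le, one_div]
        norm_num [Real.rpow_natCast]
      calc ‖s‖ * y ^ (-2:ℝ) ≤ ‖s‖ * (1 / n ^ 2) := by
            rw [← h2]; exact mul_le_mul_of_nonneg_left h1 (norm_nonneg s)
        _ = C := by rw [hC]; ring
    have hd : ∀ y ∈ Icc n (n+1), HasDerivWithinAt (fun y : ℝ => ((y:ℂ)) ^ (-s))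
        (-s * ((y:ℝ):ℂ) ^ (-s - 1)) (Icc n (n+1)) y := fun y hy =>
      (psi_deriv hs0 (lt_of_lt_of_le hnpos hy.1)).hasDerivWithinAt
    have := Convex.norm_image_sub_le_of_norm_hasDerivWithin_le hd hb (convex_Icc _ _)
      (Set.left_mem_Icc.2 (by linarith)) hx
    refine this.trans ?_
    have hxn : ‖x - n‖ ≤ 1 := by
      rw [Real.norm_eq_abs, abs_le]; constructor <;> [linarith [hx.1]; linarith [hx.2]]
    calc C * ‖x - n‖ ≤ C * 1 := by
          apply mul_le_mul_of_nonneg_left hxn; positivity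
      _ = C := mul_one C
  have hd : ∀ x ∈ Icc n (n+1), HasDerivWithinAt
      (fun y : ℝ => ((y:ℂ)) ^ (1 - s) / (1 - s) - (y:ℂ) * ((n:ℝ):ℂ) ^ (-s))
      (((x:ℝ):ℂ) ^ (-s) - ((n:ℝ):ℂ) ^ (-s)) (Icc n (n+1)) x := fun x hx =>
    (phi_deriv hs1 _ (lt_of_lt_of_le hnpos hx.1)).hasDerivWithinAt
  have key := Convex.norm_image_sub_le_of_norm_hasDerivWithin_le hd inner (convex_Icc _ _)
    (Set.left_mem_Icc.2 (by linarith)) (Set.right_mem_Icc.2 (by linarith))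
  have e1 : ‖(n + 1 : ℝ) - n‖ = 1 := by simp
  rw [e1, mul_one] at key
  convert key using 2
  case e'_3 =>
    push_cast
    ring
  case e'_2 => rfl


-- boundary term tends to 0
lemma boundary_tendsto {c : ℂ} (hc : c ≠ 0) (hcre : c.re = 0)
    (hexp : Complex.exp ((Real.log 2 : ℂ) * c) = 1) :
    Tendsto (fun M : ℕ => (((2*M+1:ℕ):ℂ) ^ c - ((M+1:ℕ):ℂ) ^ c) / c) atTop (nhds 0) := by
  have key : ∀ x : ℝ, 0 < x → ((x:ℂ)) ^ c = Complex.exp ((Real.log x : ℂ) * c) := by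
    intro x hx
    rw [Complex.cpow_def_of_ne_zero (Complex.ofReal_ne_zero.2 hx.ne'), Complex.ofReal_log hx.le]
  set δ : ℕ → ℝ := fun M => Real.log (2*M+1) - Real.log (M+1) with hδ
  have hnorm : ∀ M : ℕ, ‖(((2*M+1:ℕ):ℂ) ^ c - ((M+1:ℕ):ℂ) ^ c) / c‖
      = ‖Complex.exp ((δ M : ℂ) * c) - 1‖ / ‖c‖ := by
    intro M
    have h1 : (0:ℝ) < 2*M+1 := by positivity
    have h2 : (0:ℝ) < M+1 := by positivity
    have e1 : ((2*M+1:ℕ):ℂ) = (((2*M+1 : ℝ)):ℂ) := by push_cast; ring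
    have e2 : ((M+1:ℕ):ℂ) = (((M+1 : ℝ)):ℂ) := by push_cast; ring
    rw [e1, e2, key _ h1, key _ h2]
    have factor : Complex.exp ((Real.log (2*M+1) : ℂ) * c) - Complex.exp ((Real.log (M+1) : ℂ) * c)
        = Complex.exp ((Real.log (M+1) : ℂ) * c) * (Complex.exp ((δ M : ℂ) * c) - 1) := by
      rw [mul_sub, ← Complex.exp_add, mul_one]
      congr 2
      push_cast [hδ]
      ring
    rw [factor, norm_div, norm_mul]
    have : ‖Complex.exp ((Real.log (M+1) : ℂ) * c)‖ = 1 := by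
      rw [Complex.norm_exp]
      simp [Complex.re_ofReal_mul, hcre]
    rw [this, one_mul]
  have hq : Tendsto (fun M : ℕ => (2*M+1 : ℝ)/(M+1)) atTop (nhds 2) := by
    have : ∀ M : ℕ, (2*M+1 : ℝ)/(M+1) = 2 - 1/(M+1) := by
      intro M
      have : (M:ℝ) + 1 ≠ 0 := by positivity
      field_simp
      ring
    simp_rw [this]
    simpa using (tendsto_const_nhds (x := (2:ℝ))).sub tendsto_one_div_add_atTop_nhds_zero_nat
  have hδt : Tendsto δ atTop (nhds (Real.log 2)) := by
    have heq : ∀ M : ℕ, δ M = Real.log ((2*M+1 : ℝ)/(M+1)) := by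
      intro M
      show Real.log (2*M+1) - Real.log (M+1) = _
      rw [← Real.log_div (by positivity) (by positivity)]
    rw [funext heq]
    exact ((Real.continuousAt_log (by norm_num)).tendsto).comp hq
  have hexpt : Tendsto (fun M : ℕ => Complex.exp ((δ M : ℂ) * c)) atTop (nhds 1) := by
    rw [← hexp]
    exact (Complex.continuous_exp.tendsto _).comp
      (((Complex.continuous_ofReal.tendsto _).comp hδt).mul_const c)
  have hnum : Tendsto (fun M : ℕ => ‖Complex.exp ((δ M : ℂ) * c) - 1‖ / ‖c‖) atTop (nhds 0) := by
    have := ((hexpt.sub_const 1).norm).div_const ‖c‖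
    simpa using this
  apply squeeze_zero_norm (fun M => le_of_eq (hnorm M)) hnum

-- even partial sums
lemma even_sum {s : ℂ} (hkey : ∀ m : ℕ, ((2*m:ℕ):ℂ) ^ (-s) * 2 = ((m:ℕ):ℂ) ^ (-s)) (M : ℕ) :
    ∑ n ∈ range (2*M), ((-1:ℂ) ^ (n+1-1) * ((n+1:ℕ):ℂ) ^ (-s))
      = ∑ n ∈ range (2*M), ((n+1:ℕ):ℂ) ^ (-s) - ∑ n ∈ range M, ((n+1:ℕ):ℂ) ^ (-s) := by
  induction M with
  | zero => simp
  | succ M ih =>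
    have e2 : 2*(M+1) = (2*M)+1+1 := by ring
    rw [e2, Finset.sum_range_succ, Finset.sum_range_succ, Finset.sum_range_succ (n := M),
      Finset.sum_range_succ (f := fun n => ((n+1:ℕ):ℂ) ^ (-s)) (n := (2*M)+1),
      Finset.sum_range_succ (f := fun n => ((n+1:ℕ):ℂ) ^ (-s)) (n := 2*M), ih]
    have o1 : (-1:ℂ) ^ (2*M+1-1) = 1 := by
      simp [pow_mul]
    have o2 : (-1:ℂ) ^ (2*M+1+1-1) = -1 := by
      have : 2*M+1+1-1 = 2*M+1 := by omega
      rw [this, pow_succ, pow_mul]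
      simp
    rw [o1, o2]
    have hk := hkey (M+1)
    have e3 : (2*(M+1) : ℕ) = (2*M+1+1 : ℕ) := by omega
    rw [e3] at hk
    linear_combination -hk




lemma shifted_tendsto {s : ℂ} (hre : s.re = 1) (hs1 : s ≠ 1)
    (hexp : Complex.exp ((Real.log 2 : ℂ) * (1 - s)) = 1) :
    Tendsto (fun M : ℕ => ∑ i ∈ range M, ((M+1+i:ℕ):ℂ) ^ (-s)) atTop (nhds 0) := by
  have hc : (1 - s) ≠ 0 := sub_ne_zero_of_ne (Ne.symm hs1)
  have hcre : (1 - s).re = 0 := by simp [hre]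
  set g : ℕ → ℂ := fun m => ((m:ℕ):ℂ) ^ (1-s) / (1-s) with hg
  set T : ℕ → ℂ := fun M => (((2*M+1:ℕ):ℂ) ^ (1-s) - ((M+1:ℕ):ℂ) ^ (1-s)) / (1-s) with hT
  set E : ℕ → ℂ := fun M => ∑ i ∈ range M,
    (((M+1+i:ℕ):ℂ) ^ (-s) - (g (M+1+i+1) - g (M+1+i))) with hE
  have decomp : ∀ M : ℕ, ∑ i ∈ range M, ((M+1+i:ℕ):ℂ) ^ (-s) = T M + E M := by
    intro M
    have tel : ∑ i ∈ range M, (g (M+1+i+1) - g (M+1+i)) = g (M+1+M) - g (M+1) := by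
      have := Finset.sum_range_sub (fun i => g (M+1+i)) M
      simpa [← add_assoc] using this
    have e1 : g (M+1+M) - g (M+1) = T M := by
      simp only [hT, hg]
      rw [show M+1+M = 2*M+1 by omega, sub_div]
    rw [hE]
    dsimp only
    rw [Finset.sum_sub_distrib, tel, e1]
    ring
  have hTt : Tendsto T atTop (nhds 0) := boundary_tendsto hc hcre hexp
  have hEt : Tendsto E atTop (nhds 0) := by
    apply squeeze_zero_norm (a := fun M : ℕ => ‖s‖ * (1/((M:ℝ)+1)))
    · intro M
      calc ‖E M‖ ≤ ∑ i ∈ range M, ‖((M+1+i:ℕ):ℂ) ^ (-s) - (g (M+1+i+1) - g (M+1+i))‖ :=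
            norm_sum_le _ _
        _ ≤ ∑ _i ∈ range M, ‖s‖ / ((M:ℝ)+1) ^ 2 := by
            apply Finset.sum_le_sum
            intro i _
            have hn : (1:ℝ) ≤ ((M+1+i:ℕ):ℝ) := Nat.one_le_cast.2 (by omega)
            have h1 := step_est hre hs1 hn
            have e2 : ((M+1+i:ℕ):ℂ) ^ (-s) - (g (M+1+i+1) - g (M+1+i))
                = -(((((M+1+i:ℕ):ℝ)+1 : ℝ):ℂ) ^ (1-s) - ((((M+1+i:ℕ):ℝ) : ℝ):ℂ) ^ (1-s)) / (1-s)
                  + ((((M+1+i:ℕ):ℝ):ℂ)) ^ (-s) := by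
              simp only [hg]
              have c1 : ((M+1+i+1:ℕ):ℂ) = ((((M+1+i:ℕ):ℝ)+1 : ℝ):ℂ) := by push_cast; ring
              have c2 : ((M+1+i:ℕ):ℂ) = ((((M+1+i:ℕ):ℝ) : ℝ):ℂ) := by push_cast; ring
              rw [c1, c2]
              ring
            rw [e2]
            have e3 : ‖-(((((M+1+i:ℕ):ℝ)+1 : ℝ):ℂ) ^ (1-s) - ((((M+1+i:ℕ):ℝ) : ℝ):ℂ) ^ (1-s)) / (1-s)
                  + ((((M+1+i:ℕ):ℝ):ℂ)) ^ (-s)‖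
                = ‖(((((M+1+i:ℕ):ℝ)+1 : ℝ):ℂ) ^ (1-s) - ((((M+1+i:ℕ):ℝ) : ℝ):ℂ) ^ (1-s)) / (1-s)
                  - ((((M+1+i:ℕ):ℝ):ℂ)) ^ (-s)‖ := by
              rw [← norm_neg]
              congr 1
              ring
            rw [e3]
            refine h1.trans ?_
            refine div_le_div_of_nonneg_left (norm_nonneg s) (by positivity) ?_
            have h4 : ((M+1:ℕ):ℝ) ≤ ((M+1+i:ℕ):ℝ) := Nat.cast_le.2 (by omega)
            push_cast
            push_cast at h4
            nlinarith [Nat.cast_nonneg (α := ℝ) M, Nat.cast_nonneg (α := ℝ) i]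
        _ = (M:ℝ) * (‖s‖ / ((M:ℝ)+1) ^ 2) := by
            rw [Finset.sum_const, Finset.card_range, nsmul_eq_mul]
        _ ≤ ‖s‖ * (1/((M:ℝ)+1)) := by
            rw [mul_one_div, mul_div_assoc', div_le_div_iff₀ (by positivity) (by positivity)]
            have h0 : (0:ℝ) ≤ (M:ℝ) := Nat.cast_nonneg M
            nlinarith [norm_nonneg s]
    · simpa using tendsto_one_div_add_atTop_nhds_zero_nat.const_mul ‖s‖
  simp only [decomp]
  simpa using hTt.add hEt

end Aux

/-- For `t = 2kπ/log 2` with `k` a nonzero integer, the alternating Dirichlet series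
`∑ (−1)^{n−1} n^{−(1+it)}` converges to `0`: the alternating zeta function vanishes
at `s = 1 + 2kπi/log 2`. -/



theorem altZeta_vanishes (k : ℤ) (hk : k ≠ 0) :
    Filter.Tendsto
      (fun M : ℕ =>
        ∑ n ∈ Finset.Icc 1 M,
          (-1 : ℂ) ^ (n - 1) *
            (n : ℂ) ^ (-(1 + ((2 * k * Real.pi / Real.log 2 : ℝ) : ℂ) * Complex.I)))
      Filter.atTop (nhds 0) := by
  set t : ℝ := 2 * k * Real.pi / Real.log 2 with hts
  set s : ℂ := 1 + (t : ℂ) * I with hs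
  have hlog : Real.log 2 ≠ 0 := (Real.log_pos one_lt_two).ne'
  have htlog : t * Real.log 2 = 2 * k * Real.pi := by
    rw [hts, div_mul_cancel₀ _ hlog]
  have ht0 : t ≠ 0 := by
    rw [hts]
    apply div_ne_zero _ hlog
    have : (k:ℝ) ≠ 0 := Int.cast_ne_zero.2 hk
    positivity
  have hre : s.re = 1 := by simp [hs]
  have hs1 : s ≠ 1 := by
    intro h
    apply ht0
    have := congrArg Complex.im h
    simpa [hs] using this
  have hs0 : s ≠ 0 := by
    intro h
    have := congrArg Complex.re h
    rw [hre] at this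
    simp at this
  have hexp : Complex.exp ((Real.log 2 : ℂ) * (1 - s)) = 1 := by
    have htc : (t:ℂ) * (Real.log 2 : ℂ) = 2 * (k:ℂ) * (Real.pi : ℂ) := by
      exact_mod_cast congrArg Complex.ofReal htlog
    have e : ((Real.log 2 : ℝ):ℂ) * (1 - s) = ((-k : ℤ):ℂ) * (2 * (Real.pi:ℂ) * I) := by
      rw [hs]
      push_cast
      linear_combination (-I) * htc
    rw [e]
    exact_mod_cast Complex.exp_int_mul_two_pi_mul_I (-k)
  -- key : 2^{-s} * 2 = 1
  have h2 : ((2:ℝ):ℂ) ^ (-s) * 2 = 1 := by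
    have hne : ((2:ℝ):ℂ) ≠ 0 := by norm_num
    rw [Complex.cpow_def_of_ne_zero hne, ← Complex.ofReal_log (by norm_num : (0:ℝ) ≤ 2)]
    have e : ((Real.log 2 : ℝ):ℂ) * (-s) = (Real.log 2 : ℂ) * (1 - s) + ((-Real.log 2 : ℝ):ℂ) := by
      push_cast
      ring
    rw [e, Complex.exp_add, hexp, one_mul, ← Complex.ofReal_exp, Real.exp_neg,
      Real.exp_log (by norm_num : (0:ℝ) < 2)]
    norm_num
  have hkey : ∀ m : ℕ, ((2*m:ℕ):ℂ) ^ (-s) * 2 = ((m:ℕ):ℂ) ^ (-s) := by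
    intro m
    rcases Nat.eq_zero_or_pos m with hm | hm
    · subst hm
      simp [Complex.zero_cpow (neg_ne_zero.2 hs0)]
    · have c1 : ((2*m:ℕ):ℂ) = ((2:ℝ):ℂ) * ((m:ℝ):ℂ) := by push_cast; ring
      rw [c1, Complex.mul_cpow_ofReal_nonneg (by norm_num) (Nat.cast_nonneg m)]
      have c2 : (((m:ℝ)):ℂ) = ((m:ℕ):ℂ) := by push_cast; ring
      rw [c2]
      linear_combination ((m:ℕ):ℂ) ^ (-s) * h2
  -- convert Icc to range
  have icc_range : ∀ M : ℕ, (∑ n ∈ Finset.Icc 1 M, ((-1:ℂ) ^ (n-1) * ((n:ℕ):ℂ) ^ (-s)))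
      = ∑ n ∈ range M, ((-1:ℂ) ^ (n+1-1) * ((n+1:ℕ):ℂ) ^ (-s)) := by
    intro M
    rw [← Finset.Ico_add_one_right_eq_Icc, Finset.sum_Ico_eq_sum_range]
    simp [Nat.add_comm]
  set A : ℕ → ℂ := fun M => ∑ n ∈ range M, ((-1:ℂ) ^ (n+1-1) * ((n+1:ℕ):ℂ) ^ (-s)) with hA
  have goal_eq : (fun M : ℕ =>
        ∑ n ∈ Finset.Icc 1 M, (-1 : ℂ) ^ (n - 1) * (n : ℂ) ^ (-s)) = A := by
    funext M
    rw [icc_range M]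
  rw [show (-(1 + ((2 * (k:ℝ) * Real.pi / Real.log 2 : ℝ) : ℂ) * Complex.I)) = -s from by rw [hs, hts]]
  rw [goal_eq]
  -- even subsequence
  have hEven : Tendsto (fun M : ℕ => A (2*M)) atTop (nhds 0) := by
    have he : ∀ M : ℕ, A (2*M) = ∑ i ∈ range M, ((M+1+i:ℕ):ℂ) ^ (-s) := by
      intro M
      rw [hA]
      dsimp only
      rw [even_sum hkey M, show 2*M = M + M from by ring,
        Finset.sum_range_add (fun n => ((n+1:ℕ):ℂ) ^ (-s)) M M]
      simp only [add_sub_cancel_left]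
      apply Finset.sum_congr rfl
      intro i _
      rw [show M + i + 1 = M + 1 + i from by omega]
    rw [funext he]
    exact shifted_tendsto hre hs1 hexp
  -- combine
  have hdiv : Tendsto (fun M : ℕ => M / 2) atTop atTop :=
    Filter.tendsto_atTop_atTop.2 fun b => ⟨2*b, fun a ha => by omega⟩
  have h1 : Tendsto (fun M : ℕ => A (2*(M/2))) atTop (nhds 0) := hEven.comp hdiv
  have h2t : Tendsto (fun M : ℕ => A M - A (2*(M/2))) atTop (nhds 0) := by
    apply squeeze_zero_norm (a := fun M : ℕ => 2/((M:ℝ)+1))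
    · intro M
      have hle : 2*(M/2) ≤ M := by omega
      have e1 : A M - A (2*(M/2)) = ∑ n ∈ Finset.Ico (2*(M/2)) M,
          ((-1:ℂ) ^ (n+1-1) * ((n+1:ℕ):ℂ) ^ (-s)) := by
        rw [hA, Finset.sum_Ico_eq_sub _ hle]
      rw [e1]
      calc ‖∑ n ∈ Finset.Ico (2*(M/2)) M, ((-1:ℂ) ^ (n+1-1) * ((n+1:ℕ):ℂ) ^ (-s))‖
          ≤ ∑ n ∈ Finset.Ico (2*(M/2)) M, ‖(-1:ℂ) ^ (n+1-1) * ((n+1:ℕ):ℂ) ^ (-s)‖ :=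
            norm_sum_le _ _
        _ ≤ ∑ n ∈ Finset.Ico (2*(M/2)) M, 2/((M:ℝ)+1) := by
            apply Finset.sum_le_sum
            intro n hn
            rw [Finset.mem_Ico] at hn
            have hnorm : ‖(-1:ℂ) ^ (n+1-1) * ((n+1:ℕ):ℂ) ^ (-s)‖ = 1/((n+1:ℕ):ℝ) := by
              rw [norm_mul, norm_pow, norm_neg, norm_one, one_pow, one_mul]
              have c3 : ((n+1:ℕ):ℂ) = (((n+1:ℕ):ℝ):ℂ) := by push_cast; ring
              rw [c3,
                Complex.norm_cpow_eq_rpow_re_of_pos (by positivity) (-s),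
                show (-s).re = -1 from by simp [hre], Real.rpow_neg_one]
              rw [one_div]
            rw [hnorm]
            rw [div_le_div_iff₀ (by positivity) (by positivity)]
            have : M + 1 ≤ 2 * (n + 1) := by omega
            have hcast : ((M+1:ℕ):ℝ) ≤ ((2*(n+1):ℕ):ℝ) := Nat.cast_le.2 this
            push_cast at hcast ⊢
            linarith
        _ = (M - 2*(M/2) : ℕ) * (2/((M:ℝ)+1)) := by
            rw [Finset.sum_const, Nat.card_Ico, nsmul_eq_mul]
        _ ≤ 2/((M:ℝ)+1) := by
            have hc1 : (M - 2*(M/2) : ℕ) ≤ 1 := by omega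
            have hc2 : ((M - 2*(M/2) : ℕ):ℝ) ≤ 1 := by exact_mod_cast hc1
            have : (0:ℝ) ≤ 2/((M:ℝ)+1) := by positivity
            nlinarith
    · have := tendsto_one_div_add_atTop_nhds_zero_nat.const_mul (2:ℝ)
      simp only [mul_one_div] at this
      simpa using this
  have := h1.add h2t
  simpa using this
end
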